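/- Define φ(r) = −(1/r)log(1+r) + ((−r − log(1−r))/(2r))·(−(1/r)log(1−r) + (1/r)log(1+r) + 2/(1+r)) + 2·(r²/(1−r) + r + 2 + (2/r)log(1−r)) for r ∈ (0,1). Then φ is monotonically increasing on (0,1), lim_{r→0⁺} φ(r) = −1 and lim_{r→1⁻} φ(r) = +∞; hence the equation φ(r) = 0 has exactly one root r₁ ∈ (0,1). Moreover φ(r) > 0 for all r > R, where R ∈ (0,1) is the positive root of 2(−r − log(1−r)) = r(1−r²); consequently r₁ ≤ R. -/

import Mathlib

set_option maxHeartbeats 2000000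

open Set Filter

/-- The function `φ(r)` from the proof of Theorem 2.1. -/
noncomputable def phiFun (r : ℝ) : ℝ :=
  -(1/r) * Real.log (1 + r)
    + ((-r - Real.log (1 - r)) / (2 * r)) *
      (-(1/r) * Real.log (1 - r) + (1/r) * Real.log (1 + r) + 2 / (1 + r))
    + 2 * (r ^ 2 / (1 - r) + r + 2 + (2 / r) * Real.log (1 - r))

/-! ### Elementary logarithm bounds -/

private lemma mono_aux {g g' : ℝ → ℝ} {r : ℝ} (h0 : 0 < r)
    (hc : ContinuousOn g (Icc 0 r))
    (hd : ∀ x ∈ Ioo (0:ℝ) r, HasDerivAt g (g' x) x)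
    (hpos : ∀ x ∈ Ioo (0:ℝ) r, 0 ≤ g' x) : g 0 ≤ g r := by
  have hint : interior (Icc (0:ℝ) r) = Ioo 0 r := interior_Icc
  have := monotoneOn_of_deriv_nonneg (convex_Icc 0 r) hc
    (fun x hx => by
      rw [hint] at hx; exact (hd x hx).differentiableAt.differentiableWithinAt)
    (fun x hx => by
      rw [hint] at hx; rw [(hd x hx).deriv]; exact hpos x hx)
  exact this (left_mem_Icc.2 h0.le) (right_mem_Icc.2 h0.le) h0.le

lemma log_ub (r : ℝ) (h0 : 0 < r) (h1 : r < 1) :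
    Real.log (1+r) ≤ r - r^2/2 + r^3/3 := by
  have key : (0:ℝ) - 0^2/2 + 0^3/3 - Real.log (1+0) ≤ r - r^2/2 + r^3/3 - Real.log (1+r) := by
    apply mono_aux (g := fun x => x - x^2/2 + x^3/3 - Real.log (1+x))
      (g' := fun x => 1 - x + x^2 - 1/(1+x)) h0
    · apply ContinuousOn.sub (by fun_prop)
      apply ContinuousOn.log (by fun_prop)
      intro x hx; simp at hx; nlinarith [hx.1]
    · intro x hx
      simp only [mem_Ioo] at hx
      have hne : (1:ℝ) + x ≠ 0 := by nlinarith [hx.1]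
      have hl : HasDerivAt (fun x : ℝ => Real.log (1+x)) (1/(1+x)) x := by
        simpa using (((hasDerivAt_id x).const_add 1).log hne)
      have hp : HasDerivAt (fun x : ℝ => x - x^2/2 + x^3/3) (1 - x + x^2) x := by
        have h := (hasDerivAt_id x).sub ((hasDerivAt_pow 2 x).div_const 2)
          |>.add ((hasDerivAt_pow 3 x).div_const 3)
        exact h.congr_deriv (by norm_num <;> ring)
      exact hp.sub hl
    · intro x hx
      simp only [mem_Ioo] at hx
      have hx1 : (0:ℝ) < 1 + x := by linarith [hx.1, h0]
      have : 1 - x + x^2 - 1/(1+x) = x^3/(1+x) := by field_simp; ring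
      rw [this]; exact div_nonneg (pow_nonneg hx.1.le 3) hx1.le
  simp at key; linarith

lemma log_lb (r : ℝ) (h0 : 0 < r) (h1 : r < 1) :
    r - r^2/2 ≤ Real.log (1+r) := by
  have key : Real.log (1+0) - 0 + 0^2/2 ≤ Real.log (1+r) - r + r^2/2 := by
    apply mono_aux (g := fun x => Real.log (1+x) - x + x^2/2)
      (g' := fun x => 1/(1+x) - 1 + x) h0
    · apply ContinuousOn.add (ContinuousOn.sub ?_ (by fun_prop)) (by fun_prop)
      apply ContinuousOn.log (by fun_prop)
      intro x hx; simp at hx; nlinarith [hx.1]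
    · intro x hx
      simp only [mem_Ioo] at hx
      have hne : (1:ℝ) + x ≠ 0 := by nlinarith [hx.1]
      have hl : HasDerivAt (fun x : ℝ => Real.log (1+x)) (1/(1+x)) x := by
        simpa using (((hasDerivAt_id x).const_add 1).log hne)
      have := (hl.sub (hasDerivAt_id x)).add ((hasDerivAt_pow 2 x).div_const 2)
      exact this.congr_deriv (by norm_num <;> ring)
    · intro x hx
      simp only [mem_Ioo] at hx
      have hx1 : (0:ℝ) < 1 + x := by linarith [hx.1]
      have : 1/(1+x) - 1 + x = x^2/(1+x) := by field_simp; ring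
      rw [this]; exact div_nonneg (sq_nonneg x) hx1.le
  simp at key; linarith

lemma neglog_lb (r : ℝ) (h0 : 0 < r) (h1 : r < 1) :
    r + r^2/2 ≤ -Real.log (1-r) := by
  have key : -Real.log (1-0) - 0 - 0^2/2 ≤ -Real.log (1-r) - r - r^2/2 := by
    apply mono_aux (g := fun x => -Real.log (1-x) - x - x^2/2)
      (g' := fun x => 1/(1-x) - 1 - x) h0
    · apply ContinuousOn.sub (ContinuousOn.sub ?_ (by fun_prop)) (by fun_prop)
      apply ContinuousOn.neg
      apply ContinuousOn.log (by fun_prop)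
      intro x hx; simp at hx; nlinarith [hx.2]
    · intro x hx
      simp only [mem_Ioo] at hx
      have hne : (1:ℝ) - x ≠ 0 := by nlinarith [hx.2, h1]
      have hl : HasDerivAt (fun x : ℝ => Real.log (1-x)) (-1/(1-x)) x := by
        have := (((hasDerivAt_id x).const_sub 1).log hne)
        simpa using this
      have := (hl.neg.sub (hasDerivAt_id x)).sub ((hasDerivAt_pow 2 x).div_const 2)
      exact this.congr_deriv (by norm_num <;> ring)
    · intro x hx
      simp only [mem_Ioo] at hx
      have hx1 : (0:ℝ) < 1 - x := by linarith [hx.2, h1]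
      have : 1/(1-x) - 1 - x = x^2/(1-x) := by field_simp; ring
      rw [this]; exact div_nonneg (sq_nonneg x) hx1.le
  simp at key; linarith

lemma neglog_ub (r : ℝ) (h0 : 0 < r) (h1 : r < 1) :
    -Real.log (1-r) ≤ r + r^2/2 + r^3/(3*(1-r)) := by
  have key : (0:ℝ) + 0^2/2 + 0^3/(3*(1-0)) + Real.log (1-0)
      ≤ r + r^2/2 + r^3/(3*(1-r)) + Real.log (1-r) := by
    apply mono_aux (g := fun x => x + x^2/2 + x^3/(3*(1-x)) + Real.log (1-x))
      (g' := fun x => 1 + x + (3*x^2*(3*(1-x)) - x^3*(-3))/(3*(1-x))^2 - 1/(1-x)) h0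
    · apply ContinuousOn.add (ContinuousOn.add (by fun_prop) ?_) ?_
      · apply ContinuousOn.div (by fun_prop) (by fun_prop)
        intro x hx; simp at hx; nlinarith [hx.2, h1]
      · apply ContinuousOn.log (by fun_prop)
        intro x hx; simp at hx; nlinarith [hx.2, h1]
    · intro x hx
      simp only [mem_Ioo] at hx
      have hx1 : (0:ℝ) < 1 - x := by linarith [hx.2, h1]
      have hne : (1:ℝ) - x ≠ 0 := hx1.ne'
      have hne3 : (3:ℝ)*(1-x) ≠ 0 := by positivity
      have hl : HasDerivAt (fun x : ℝ => Real.log (1-x)) (-1/(1-x)) x := by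
        simpa using (((hasDerivAt_id x).const_sub 1).log hne)
      have hden : HasDerivAt (fun x : ℝ => 3*(1-x)) (-3) x := by
        have := ((hasDerivAt_id x).const_sub 1).const_mul 3
        exact this.congr_deriv (by ring)
      have hdiv := (hasDerivAt_pow 3 x).div hden hne3
      have := (((hasDerivAt_id x).add ((hasDerivAt_pow 2 x).div_const 2)).add hdiv).add hl
      exact this.congr_deriv (by norm_num <;> ring)
    · intro x hx
      simp only [mem_Ioo] at hx
      have hx1 : (0:ℝ) < 1 - x := by linarith [hx.2, h1]
      have heq : 1 + x + (3*x^2*(3*(1-x)) - x^3*(-3))/(3*(1-x))^2 - 1/(1-x)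
          = x^3/(3*(1-x)^2) := by field_simp; ring
      rw [heq]
      exact div_nonneg (pow_nonneg hx.1.le 3) (by positivity)
  simp at key; linarith

/-! ### Core polynomial inequalities -/

lemma keyD (r p q : ℝ) (hr0 : 0 < r) (hr1 : r < 1) (hp0 : 0 ≤ p) (hp1 : p ≤ r^3/3)
    (hq0 : 0 ≤ q) (hq1 : (1-r)*q ≤ r^3/3) :
    0 < 3*r^3+6*r^5+6*r^6+r^7 + q*(4*r-3*r^3-3*r^4+3*r^5-r^6) + p*(2*r-3*r^3+r^4+r^5-r^6)
        - 2*(1-r^2)^2*(q^2+p*q) := by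
  have h1 : 0 < 1 - r := by linarith
  have h2 : 0 < 1 + r := by linarith
  have hq2 : (1-r^2)^2*q^2 ≤ (1+r)^2 * (r^3/3)^2 := by
    have : (1-r^2)^2*q^2 = (1+r)^2 * ((1-r)*q)^2 := by ring
    rw [this]
    have := mul_le_mul hq1 hq1 (by positivity) (le_of_lt (by positivity))
    nlinarith [sq_nonneg (1+r)]
  have hq3 : (1-r^2)^2*(p*q) ≤ (1+r)^2*(1-r) * (r^3/3) * (r^3/3) := by
    have e : (1-r^2)^2*(p*q) = (1+r)^2*(1-r) * p * ((1-r)*q) := by ring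
    rw [e]
    have hc : 0 ≤ (1+r)^2*(1-r) := by positivity
    nlinarith [mul_le_mul hp1 hq1 (by positivity) (by positivity : (0:ℝ) ≤ r^3/3)]
  have hcq : 0 ≤ q*(4*r-3*r^3-3*r^4+3*r^5-r^6) := by
    have : 4*r-3*r^3-3*r^4+3*r^5-r^6 = r*(1-r)*((r^2-r)^2+4*r+4) := by ring
    rw [this]; positivity
  have hcp : 0 ≤ p*(2*r-3*r^3+r^4+r^5-r^6) := by
    have : 2*r-3*r^3+r^4+r^5-r^6 = r*(1-r)*(r^4-r^2+2*r+2) := by ring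
    have h4 : 0 < r^4-r^2+2*r+2 := by nlinarith [sq_nonneg r, sq_nonneg (r^2-1)]
    rw [this]; positivity
  nlinarith [pow_le_one₀ (le_of_lt hr0) (le_of_lt hr1) (n:=3), pow_pos hr0 3, sq_nonneg r]

lemma keyII (r p q : ℝ) (hr0 : 0 < r) (hr1 : r ≤ 1/2) (hp0 : 0 ≤ p) (hp1 : p ≤ r^3/3)
    (hq0 : 0 ≤ q) (hq1 : (1-r)*q ≤ r^3/3) :
    |(-2*r^2+3*r^3+5*r^4+2*r^5 + q*(-4*r-3/2*r^2+6*r^3-1/2*r^4) + q^2*(1-r^2)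
      + p*(-2*r+1/2*r^2+2*r^3-1/2*r^4) + p*q*(1-r^2)) + 2*r^2*(1-r^2)|
      ≤ 20*r^3*(1-r^2) := by
  have h1 : (0:ℝ) < 1 - r := by linarith
  have hr2 : r^2 ≤ 1/4 := by nlinarith
  have hr3 : r^3 ≤ r^2/2 := by nlinarith [sq_nonneg r]
  have hr4 : r^4 ≤ r^3/2 := by nlinarith [pow_pos hr0 3]
  have hr5 : r^5 ≤ r^4/2 := by nlinarith [pow_pos hr0 4]
  have hq2 : q ≤ 2/3*r^3 := by nlinarith
  have hT1u : q*(-4*r-3/2*r^2+6*r^3-1/2*r^4) ≤ 4*q :=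
    by nlinarith [mul_nonneg hq0 (show (0:ℝ) ≤ 4-(-4*r-3/2*r^2+6*r^3-1/2*r^4) by
        nlinarith [pow_pos hr0 3, pow_pos hr0 4])]
  have hT1l : -(4*q) ≤ q*(-4*r-3/2*r^2+6*r^3-1/2*r^4) :=
    by nlinarith [mul_nonneg hq0 (show (0:ℝ) ≤ (-4*r-3/2*r^2+6*r^3-1/2*r^4)+4 by
        nlinarith [pow_pos hr0 3, pow_pos hr0 4])]
  have hT2u : q^2*(1-r^2) ≤ r^3 := by
    have : q^2 ≤ (2/3*r^3)^2 := by nlinarith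
    have h6 : r^3*r^3 ≤ r^3 := by
      nlinarith [pow_pos hr0 3, pow_le_one₀ hr0.le (by linarith : r ≤ 1) (n:=3)]
    nlinarith [sq_nonneg q, pow_pos hr0 3, sq_nonneg r, mul_nonneg (sq_nonneg q) (sq_nonneg r)]
  have hT3u : p*(-2*r+1/2*r^2+2*r^3-1/2*r^4) ≤ 2*p :=
    by nlinarith [mul_nonneg hp0 (show (0:ℝ) ≤ 2-(-2*r+1/2*r^2+2*r^3-1/2*r^4) by
        nlinarith [pow_pos hr0 3, pow_pos hr0 4])]
  have hT3l : -(2*p) ≤ p*(-2*r+1/2*r^2+2*r^3-1/2*r^4) :=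
    by nlinarith [mul_nonneg hp0 (show (0:ℝ) ≤ (-2*r+1/2*r^2+2*r^3-1/2*r^4)+2 by
        nlinarith [pow_pos hr0 3, pow_pos hr0 4])]
  have hT4u : p*q*(1-r^2) ≤ r^3 := by
    have hpq : p*q ≤ (r^3/3)*(2/3*r^3) := mul_le_mul hp1 hq2 hq0 (by positivity)
    have h6 : r^3*r^3 ≤ r^3 := by
      nlinarith [pow_pos hr0 3, pow_le_one₀ hr0.le (by linarith : r ≤ 1) (n:=3)]
    nlinarith [mul_nonneg hp0 hq0, sq_nonneg r, mul_nonneg (mul_nonneg hp0 hq0) (sq_nonneg r)]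
  have hT4l : 0 ≤ p*q*(1-r^2) := by nlinarith [mul_nonneg hp0 hq0]
  have hT2l : 0 ≤ q^2*(1-r^2) := by nlinarith [sq_nonneg q]
  have hRHS : 15*r^3 ≤ 20*r^3*(1-r^2) := by nlinarith [pow_pos hr0 3]
  rw [abs_le]
  constructor <;> nlinarith [pow_pos hr0 3]

lemma keyIII (r p q : ℝ) (hr0 : 1/2 < r) (hr1 : r < 1) (hp0 : 0 ≤ p) (hp1 : p ≤ r^3/3)
    (hq0 : 0 ≤ q) (hq1 : (1-r)*q ≤ r^3/3) :
    r^2*(1+r) - 12*r^2*(1+r)*(1-r)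
      ≤ (-2*r^2+3*r^3+5*r^4+2*r^5 + q*(-4*r-3/2*r^2+6*r^3-1/2*r^4) + q^2*(1-r^2)
      + p*(-2*r+1/2*r^2+2*r^3-1/2*r^4) + p*q*(1-r^2)) := by
  have h0 : (0:ℝ) < r := by linarith
  have h1 : (0:ℝ) < 1 - r := by linarith
  have h2 : (0:ℝ) < 1 + r := by linarith
  nlinarith [sq_nonneg (2*(1-r^2)*q - (4*r+3/2*r^2-6*r^3+1/2*r^4)),
    mul_nonneg (mul_nonneg hp0 hq0) h1.le, mul_nonneg hp0 h1.le, sq_nonneg q,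
    mul_pos h0 h0, sq_nonneg (1-r), mul_nonneg hq0 h1.le, pow_pos h0 3,
    mul_nonneg (mul_nonneg hp0 hq0) (sq_nonneg r), mul_nonneg hp0 (sq_nonneg r)]

lemma keyVI (R p : ℝ) (hr0 : 0 < R) (hr1 : R < 1) (hA : 0 ≤ 1-R-R^2)
    (hB : 3*(1-R)*(1-R-R^2) ≤ 2*R^2) (hp0 : 0 ≤ p) (hp1 : p ≤ R^3/3) :
    0 < (-2*R^2+3*R^3+5*R^4+2*R^5 + (R*(1-R-R^2)/2)*(-4*R-3/2*R^2+6*R^3-1/2*R^4)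
      + (R*(1-R-R^2)/2)^2*(1-R^2)
      + p*(-2*R+1/2*R^2+2*R^3-1/2*R^4) + p*(R*(1-R-R^2)/2)*(1-R^2)) := by
  have h1 : (0:ℝ) < 1 - R := by linarith
  have h2 : (0:ℝ) < 1 + R := by linarith
  have hRu : R ≤ 0.619 := by nlinarith
  have hRl : 0.478 ≤ R := by nlinarith [sq_nonneg R, sq_nonneg (1-R)]
  nlinarith [mul_nonneg hp0 hA, sq_nonneg (1-R-R^2), mul_nonneg hp0 hr0.le,
    mul_nonneg (mul_nonneg hp0 hA) hr0.le, sq_nonneg R, pow_pos hr0 3,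
    mul_nonneg hp0 (sq_nonneg R), mul_nonneg (mul_nonneg hA hA) hr0.le]

lemma keyIV (p q : ℝ) (hp0 : 0 ≤ p) (hp1 : p ≤ (1/4:ℝ)^3/3)
    (hq0 : 0 ≤ q) (hq1 : (1-(1/4:ℝ))*q ≤ (1/4:ℝ)^3/3) :
    (-2*(1/4:ℝ)^2+3*(1/4:ℝ)^3+5*(1/4:ℝ)^4+2*(1/4:ℝ)^5
      + q*(-4*(1/4:ℝ)-3/2*(1/4:ℝ)^2+6*(1/4:ℝ)^3-1/2*(1/4:ℝ)^4) + q^2*(1-(1/4:ℝ)^2)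
      + p*(-2*(1/4:ℝ)+1/2*(1/4:ℝ)^2+2*(1/4:ℝ)^3-1/2*(1/4:ℝ)^4) + p*q*(1-(1/4:ℝ)^2)) < 0 := by
  norm_num
  nlinarith [mul_nonneg hp0 hq0, sq_nonneg q]

lemma keyV (p q : ℝ) (hp0 : 0 ≤ p) (hp1 : p ≤ (1/2:ℝ)^3/3)
    (hq0 : 0 ≤ q) (hq1 : (1-(1/2:ℝ))*q ≤ (1/2:ℝ)^3/3) :
    0 < (-2*(1/2:ℝ)^2+3*(1/2:ℝ)^3+5*(1/2:ℝ)^4+2*(1/2:ℝ)^5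
      + q*(-4*(1/2:ℝ)-3/2*(1/2:ℝ)^2+6*(1/2:ℝ)^3-1/2*(1/2:ℝ)^4) + q^2*(1-(1/2:ℝ)^2)
      + p*(-2*(1/2:ℝ)+1/2*(1/2:ℝ)^2+2*(1/2:ℝ)^3-1/2*(1/2:ℝ)^4) + p*q*(1-(1/2:ℝ)^2)) := by
  norm_num
  nlinarith [mul_nonneg hp0 hq0, sq_nonneg q]

/-! ### The derivative of `phiFun` -/

noncomputable def phiD (r : ℝ) : ℝ :=
  (3*r^3+6*r^5+6*r^6+r^7
  + (-Real.log (1-r)-(r+r^2/2))*(4*r-3*r^3-3*r^4+3*r^5-r^6)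
  + (Real.log (1+r)-(r-r^2/2))*(2*r-3*r^3+r^4+r^5-r^6)
  - 2*(1-r^2)^2*((-Real.log (1-r)-(r+r^2/2))^2
      +(Real.log (1+r)-(r-r^2/2))*(-Real.log (1-r)-(r+r^2/2))))
  / (2*r^3*(1+r)^2*(1-r)^2)

lemma hasDerivAt_phiFun (r : ℝ) (h0 : 0 < r) (h1 : r < 1) :
    HasDerivAt phiFun (phiD r) r := by
  have h1p : (0:ℝ) < 1 + r := by linarith
  have h1m : (0:ℝ) < 1 - r := by linarith
  have hne : r ≠ 0 := h0.ne'
  have hne1p : (1:ℝ) + r ≠ 0 := h1p.ne'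
  have hne1m : (1:ℝ) - r ≠ 0 := h1m.ne'
  have ha : HasDerivAt (fun x : ℝ => Real.log (1+x)) (1/(1+r)) r := by
    simpa using (((hasDerivAt_id r).const_add 1).log hne1p)
  have hb : HasDerivAt (fun x : ℝ => Real.log (1-x)) (-1/(1-r)) r := by
    simpa using (((hasDerivAt_id r).const_sub 1).log hne1m)
  have hinv : HasDerivAt (fun x : ℝ => 1/x) ((0*r-1*1)/r^2) r :=
    (hasDerivAt_const r (1:ℝ)).div (hasDerivAt_id r) hne
  have hf1 := (hinv.neg).mul ha
  have hA : HasDerivAt (fun x : ℝ => -x - Real.log (1-x)) (-1 - (-1/(1-r))) r :=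
    (hasDerivAt_id r).neg.sub hb
  have hden : HasDerivAt (fun x : ℝ => 2*x) 2 r := by
    simpa using (hasDerivAt_id r).const_mul 2
  have hQ := hA.div hden (by positivity)
  have hS1 := (hinv.neg).mul hb
  have hS2 := hinv.mul ha
  have hS3 : HasDerivAt (fun x : ℝ => 2/(1+x)) ((0*(1+r)-2*1)/(1+r)^2) r :=
    (hasDerivAt_const r (2:ℝ)).div ((hasDerivAt_id r).const_add 1) hne1p
  have hS := (hS1.add hS2).add hS3
  have hf2 := hQ.mul hS
  have hq1 : HasDerivAt (fun x : ℝ => x^2/(1-x))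
      ((2*r^(2-1)*(1-r) - r^2*(-1))/(1-r)^2) r := by
    have := (hasDerivAt_pow 2 r).div ((hasDerivAt_id r).const_sub 1) hne1m
    exact this.congr_deriv (by norm_num <;> ring)
  have h2r : HasDerivAt (fun x : ℝ => 2/x) ((0*r-2*1)/r^2) r :=
    (hasDerivAt_const r (2:ℝ)).div (hasDerivAt_id r) hne
  have hq4 := h2r.mul hb
  have hf3 := ((((hq1.add (hasDerivAt_id r)).add (hasDerivAt_const r 2)).add hq4).const_mul 2)
  have htot := (hf1.add hf2).add hf3
  have heq : phiFun = fun x : ℝ =>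
      -(1/x) * Real.log (1 + x)
      + ((-x - Real.log (1 - x)) / (2 * x)) *
        (-(1/x) * Real.log (1 - x) + (1/x) * Real.log (1 + x) + 2 / (1 + x))
      + 2 * (x ^ 2 / (1 - x) + x + 2 + (2 / x) * Real.log (1 - x)) := rfl
  rw [heq]
  refine htot.congr_deriv ?_
  simp only [Pi.neg_apply, Pi.div_apply, Pi.mul_apply, Pi.add_apply]
  unfold phiD
  generalize Real.log (1+r) = a
  generalize Real.log (1-r) = b
  field_simp
  ring

/-- `phiFun` written with cleared denominators. -/
lemma phiFun_eq (r : ℝ) (h0 : 0 < r) (h1 : r < 1) :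
    phiFun r = (-2*r^2+3*r^3+5*r^4+2*r^5
      + (-Real.log (1-r)-(r+r^2/2))*(-4*r-3/2*r^2+6*r^3-1/2*r^4)
      + (-Real.log (1-r)-(r+r^2/2))^2*(1-r^2)
      + (Real.log (1+r)-(r-r^2/2))*(-2*r+1/2*r^2+2*r^3-1/2*r^4)
      + (Real.log (1+r)-(r-r^2/2))*(-Real.log (1-r)-(r+r^2/2))*(1-r^2))
      / (2*r^2*(1+r)*(1-r)) := by
  have h1p : (0:ℝ) < 1 + r := by linarith
  have h1m : (0:ℝ) < 1 - r := by linarith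
  unfold phiFun
  generalize Real.log (1+r) = a
  generalize Real.log (1-r) = b
  field_simp
  ring

/-- Bounds bundle for a point of `(0,1)`. -/
lemma pq_bounds (r : ℝ) (h0 : 0 < r) (h1 : r < 1) :
    0 ≤ Real.log (1+r)-(r-r^2/2) ∧ Real.log (1+r)-(r-r^2/2) ≤ r^3/3 ∧
    0 ≤ -Real.log (1-r)-(r+r^2/2) ∧ (1-r)*(-Real.log (1-r)-(r+r^2/2)) ≤ r^3/3 := by
  have l1 := log_lb r h0 h1
  have l2 := log_ub r h0 h1
  have l3 := neglog_lb r h0 h1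
  have l4 := neglog_ub r h0 h1
  have h1m : (0:ℝ) < 1 - r := by linarith
  refine ⟨by linarith, by linarith, by linarith, ?_⟩
  have : -Real.log (1-r)-(r+r^2/2) ≤ r^3/(3*(1-r)) := by linarith
  calc (1-r)*(-Real.log (1-r)-(r+r^2/2)) ≤ (1-r)*(r^3/(3*(1-r))) := by
        exact mul_le_mul_of_nonneg_left this h1m.le
    _ = r^3/3 := by field_simp

lemma phiD_pos (r : ℝ) (h0 : 0 < r) (h1 : r < 1) : 0 < phiD r := by
  obtain ⟨hp0, hp1, hq0, hq1⟩ := pq_bounds r h0 h1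
  have h1p : (0:ℝ) < 1 + r := by linarith
  have h1m : (0:ℝ) < 1 - r := by linarith
  unfold phiD
  apply div_pos _ (by positivity)
  have := keyD r (Real.log (1+r)-(r-r^2/2)) (-Real.log (1-r)-(r+r^2/2))
    h0 h1 hp0 hp1 hq0 hq1
  linarith [this]

lemma strictMono_phi : StrictMonoOn phiFun (Ioo (0:ℝ) 1) := by
  apply strictMonoOn_of_deriv_pos (convex_Ioo 0 1)
  · intro x hx
    simp only [mem_Ioo] at hx
    exact (hasDerivAt_phiFun x hx.1 hx.2).differentiableAt.continuousAt.continuousWithinAt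
  · intro x hx
    rw [interior_Ioo, mem_Ioo] at hx
    rw [(hasDerivAt_phiFun x hx.1 hx.2).deriv]
    exact phiD_pos x hx.1 hx.2

/-! ### Limits -/

lemma phi_near0 (r : ℝ) (h0 : 0 < r) (hr : r ≤ 1/2) : |phiFun r - (-1)| ≤ 10*r := by
  have h1 : r < 1 := by linarith
  obtain ⟨hp0, hp1, hq0, hq1⟩ := pq_bounds r h0 h1
  have h1p : (0:ℝ) < 1 + r := by linarith
  have h1m : (0:ℝ) < 1 - r := by linarith
  have hden : (0:ℝ) < 2*r^2*(1+r)*(1-r) := by positivity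
  have hk := keyII r (Real.log (1+r)-(r-r^2/2)) (-Real.log (1-r)-(r+r^2/2))
    h0 hr hp0 hp1 hq0 hq1
  rw [phiFun_eq r h0 h1]
  rw [div_sub' hden.ne', abs_div, abs_of_pos hden, div_le_iff₀ hden]
  have e1 : 10*r*(2*r^2*(1+r)*(1-r)) = 20*r^3*(1-r^2) := by ring
  rw [e1]
  calc _ = |(-2*r^2+3*r^3+5*r^4+2*r^5
      + (-Real.log (1-r)-(r+r^2/2))*(-4*r-3/2*r^2+6*r^3-1/2*r^4)
      + (-Real.log (1-r)-(r+r^2/2))^2*(1-r^2)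
      + (Real.log (1+r)-(r-r^2/2))*(-2*r+1/2*r^2+2*r^3-1/2*r^4)
      + (Real.log (1+r)-(r-r^2/2))*(-Real.log (1-r)-(r+r^2/2))*(1-r^2)) + 2*r^2*(1-r^2)| := by
        congr 1; ring
    _ ≤ 20*r^3*(1-r^2) := hk

lemma phi_tendsto_zero : Tendsto phiFun (nhdsWithin 0 (Ioi 0)) (nhds (-1)) := by
  have hmem : Ioo (0:ℝ) (1/2) ∈ nhdsWithin (0:ℝ) (Ioi 0) :=
    Ioo_mem_nhdsGT_of_mem (by norm_num : (0:ℝ) ∈ Ico (0:ℝ) (1/2))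
  apply tendsto_of_tendsto_of_tendsto_of_le_of_le'
    (g := fun r => -1 - 10*r) (h := fun r => -1 + 10*r)
  · have : Tendsto (fun r : ℝ => -1 - 10*r) (nhds 0) (nhds (-1)) := by
      have := (tendsto_const_nhds (x := (-1:ℝ))).sub ((tendsto_id (x := nhds (0:ℝ))).const_mul 10)
      simpa using this
    exact this.mono_left nhdsWithin_le_nhds
  · have : Tendsto (fun r : ℝ => -1 + 10*r) (nhds 0) (nhds (-1)) := by
      have := (tendsto_const_nhds (x := (-1:ℝ))).add ((tendsto_id (x := nhds (0:ℝ))).const_mul 10)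
      simpa using this
    exact this.mono_left nhdsWithin_le_nhds
  · filter_upwards [hmem] with r hr
    have := phi_near0 r hr.1 (le_of_lt hr.2)
    rw [abs_le] at this
    linarith [this.1]
  · filter_upwards [hmem] with r hr
    have := phi_near0 r hr.1 (le_of_lt hr.2)
    rw [abs_le] at this
    linarith [this.2]

lemma phi_lb_near1 (r : ℝ) (h0 : 1/2 < r) (h1 : r < 1) :
    1/(2*(1-r)) - 6 ≤ phiFun r := by
  have hr0 : (0:ℝ) < r := by linarith
  obtain ⟨hp0, hp1, hq0, hq1⟩ := pq_bounds r hr0 h1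
  have h1p : (0:ℝ) < 1 + r := by linarith
  have h1m : (0:ℝ) < 1 - r := by linarith
  have hden : (0:ℝ) < 2*r^2*(1+r)*(1-r) := by positivity
  have hk := keyIII r (Real.log (1+r)-(r-r^2/2)) (-Real.log (1-r)-(r+r^2/2))
    h0 h1 hp0 hp1 hq0 hq1
  rw [phiFun_eq r hr0 h1]
  rw [le_div_iff₀ hden]
  calc (1/(2*(1-r)) - 6) * (2*r^2*(1+r)*(1-r)) = r^2*(1+r) - 12*r^2*(1+r)*(1-r) := by
        field_simp; ring
    _ ≤ _ := hk

lemma phi_tendsto_one : Tendsto phiFun (nhdsWithin 1 (Iio 1)) atTop := by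
  have hmem : Ioo (1/2:ℝ) 1 ∈ nhdsWithin (1:ℝ) (Iio 1) :=
    Ioo_mem_nhdsLT_of_mem (by norm_num : (1:ℝ) ∈ Ioc (1/2:ℝ) 1)
  have hf : Tendsto (fun r : ℝ => 1/(2*(1-r)) - 6) (nhdsWithin 1 (Iio 1)) atTop := by
    apply tendsto_atTop_add_const_right
    have h1 : Tendsto (fun r : ℝ => 1-r) (nhdsWithin 1 (Iio 1)) (nhdsWithin 0 (Ioi 0)) := by
      apply tendsto_nhdsWithin_of_tendsto_nhds_of_eventually_within
      · have : Tendsto (fun r : ℝ => 1-r) (nhds 1) (nhds 0) := by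
          have := (tendsto_const_nhds (x := (1:ℝ))).sub (tendsto_id (x := nhds (1:ℝ)))
          simpa using this
        exact this.mono_left nhdsWithin_le_nhds
      · filter_upwards [self_mem_nhdsWithin] with r hr
        simp only [mem_Iio] at hr
        simp [mem_Ioi]; linarith
    have h2 : Tendsto (fun y : ℝ => 1/(2*y)) (nhdsWithin 0 (Ioi 0)) atTop := by
      have := tendsto_inv_nhdsGT_zero.const_mul_atTop (by norm_num : (0:ℝ) < 1/2)
      apply this.congr'
      filter_upwards with y
      ring
    exact h2.comp h1
  apply tendsto_atTop_mono' _ _ hf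
  filter_upwards [hmem] with r hr
  exact phi_lb_near1 r hr.1 hr.2

/-! ### Assembly -/

theorem stmt15 (R : ℝ) (hR : R ∈ Ioo (0:ℝ) 1)
    (hRroot : 2 * (-R - Real.log (1 - R)) = R * (1 - R ^ 2)) :
    MonotoneOn phiFun (Ioo (0:ℝ) 1) ∧
    Tendsto phiFun (nhdsWithin 0 (Ioi 0)) (nhds (-1)) ∧
    Tendsto phiFun (nhdsWithin 1 (Iio 1)) atTop ∧
    (∃! r₁, r₁ ∈ Ioo (0:ℝ) 1 ∧ phiFun r₁ = 0) ∧
    (∀ r ∈ Ioo (0:ℝ) 1, R < r → 0 < phiFun r) ∧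
    (∀ r₁ ∈ Ioo (0:ℝ) 1, phiFun r₁ = 0 → r₁ ≤ R) := by
  obtain ⟨hR0, hR1⟩ := hR
  have hcont : ContinuousOn phiFun (Ioo (0:ℝ) 1) := by
    intro x hx
    simp only [mem_Ioo] at hx
    exact (hasDerivAt_phiFun x hx.1 hx.2).differentiableAt.continuousAt.continuousWithinAt
  -- value at 1/4 is negative
  have hneg : phiFun (1/4) < 0 := by
    have h0 : (0:ℝ) < 1/4 := by norm_num
    have h1 : (1/4:ℝ) < 1 := by norm_num
    obtain ⟨hp0, hp1, hq0, hq1⟩ := pq_bounds (1/4) h0 h1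
    rw [phiFun_eq (1/4) h0 h1]
    apply div_neg_of_neg_of_pos _ (by norm_num)
    exact keyIV _ _ hp0 hp1 hq0 hq1
  -- value at 1/2 is positive
  have hpos : 0 < phiFun (1/2) := by
    have h0 : (0:ℝ) < 1/2 := by norm_num
    have h1 : (1/2:ℝ) < 1 := by norm_num
    obtain ⟨hp0, hp1, hq0, hq1⟩ := pq_bounds (1/2) h0 h1
    rw [phiFun_eq (1/2) h0 h1]
    apply div_pos _ (by norm_num)
    exact keyV _ _ hp0 hp1 hq0 hq1
  have hq_eq : -Real.log (1-R)-(R+R^2/2) = R*(1-R-R^2)/2 := by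
    have : -Real.log (1-R) = R + R*(1-R^2)/2 := by linarith [hRroot]
    rw [this]; ring
  obtain ⟨hp0R, hp1R, hq0R, hq1R⟩ := pq_bounds R hR0 hR1
  have hA : 0 ≤ 1-R-R^2 := by
    rw [hq_eq] at hq0R
    by_contra hcon
    push_neg at hcon
    nlinarith
  have hB : 3*(1-R)*(1-R-R^2) ≤ 2*R^2 := by
    rw [hq_eq] at hq1R
    nlinarith
  have hphiR : 0 < phiFun R := by
    rw [phiFun_eq R hR0 hR1]
    apply div_pos _ (by nlinarith)
    rw [hq_eq]
    exact keyVI R _ hR0 hR1 hA hB hp0R hp1R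
  refine ⟨strictMono_phi.monotoneOn, phi_tendsto_zero, phi_tendsto_one, ?_, ?_, ?_⟩
  · -- unique root
    have hsub : Icc (1/4:ℝ) (1/2) ⊆ Ioo (0:ℝ) 1 := by
      intro x hx; simp only [mem_Icc] at hx; constructor <;> [linarith [hx.1]; linarith [hx.2]]
    have hivt := intermediate_value_Ioo (by norm_num : (1/4:ℝ) ≤ 1/2) (hcont.mono hsub)
    have h0mem : (0:ℝ) ∈ Ioo (phiFun (1/4)) (phiFun (1/2)) := ⟨hneg, hpos⟩
    obtain ⟨c, hc, hc0⟩ := hivt h0mem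
    have hcI : c ∈ Ioo (0:ℝ) 1 := by
      simp only [mem_Ioo] at hc ⊢; constructor <;> [linarith [hc.1]; linarith [hc.2]]
    refine ⟨c, ⟨hcI, hc0⟩, ?_⟩
    rintro y ⟨hyI, hy0⟩
    exact strictMono_phi.injOn hyI hcI (by rw [hy0, hc0])
  · intro r hr hRr
    calc 0 < phiFun R := hphiR
      _ < phiFun r := strictMono_phi ⟨hR0, hR1⟩ hr hRr
  · intro r₁ hr₁ h0
    by_contra hcon
    push_neg at hcon
    have := strictMono_phi ⟨hR0, hR1⟩ hr₁ hcon
    linarith
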